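/- Let $a^h$ and $a$ be as in the abstract VEM stability lemma (with $a^h(u,v) = a(\Pi u,\Pi v) + S((I-\Pi)u,(I-\Pi)v)$, $a$-orthogonal projection $\Pi$, and $\alpha_* a \le S \le \alpha^* a$ on the range of $I-\Pi$). Then $a^h$ is bounded: $|a^h(u,v)| \le \max\{1,\alpha^*\}\,a(u,u)^{1/2} a(v,v)^{1/2}$ for all $u,v \in V_h$. -/

import Mathlib

/-!
By `a`-orthogonality of `Π`, `a(u,u) = a(Πu,Πu) + a((I-Π)u,(I-Π)u)`. Writing `‖·‖` for the
`a`-seminorm, Cauchy–Schwarz for `a` bounds `a(Πu,Πv)` by `‖Πu‖ ‖Πv‖`, and Cauchy–Schwarz for `S`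
together with `S ≤ α* a` on `range (I-Π)` bounds the stabilization term by
`α* ‖(I-Π)u‖ ‖(I-Π)v‖`. Cauchy–Schwarz in `ℝ²` recombines the two parts into `‖u‖ ‖v‖`.
-/

namespace Real

lemma sqrt_mul_sqrt_add_sqrt_mul_sqrt_le {a b c d : ℝ}
    (ha : 0 ≤ a) (hb : 0 ≤ b) (hc : 0 ≤ c) (hd : 0 ≤ d) :
    √a * √c + √b * √d ≤ √(a + b) * √(c + d) := by
  rw [← sqrt_mul (add_nonneg ha hb)]
  apply le_sqrt_of_sq_le
  nlinarith [sq_sqrt ha, sq_sqrt hb, sq_sqrt hc, sq_sqrt hd,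
    sq_nonneg (√a * √d - √b * √c)]

end Real

namespace LinearMap.BilinForm

variable {V : Type*} [AddCommGroup V] [Module ℝ V] {B : LinearMap.BilinForm ℝ V}

lemma apply_add_self_of_apply_eq_zero (hB : LinearMap.IsSymm B) {x y : V} (h : B x y = 0) :
    B (x + y) (x + y) = B x x + B y y := by
  have h' : B y x = 0 := by rw [← hB.eq x y, h, map_zero]
  simp only [map_add, LinearMap.add_apply, h, h']
  ring

lemma abs_apply_le_sqrt_mul_sqrt (hs : ∀ x, 0 ≤ B x x) (hB : LinearMap.IsSymm B) (x y : V) :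
    |B x y| ≤ √(B x x) * √(B y y) := by
  rw [← Real.sqrt_mul (hs x)]
  exact Real.abs_le_sqrt (B.apply_sq_le_of_symm hs hB x y)

lemma abs_apply_le_of_apply_self_le_mul (hs : ∀ x, 0 ≤ B x x) (hB : LinearMap.IsSymm B)
    (A : LinearMap.BilinForm ℝ V) {c : ℝ} (hc : 0 ≤ c) {x y : V}
    (hx : B x x ≤ c * A x x) (hy : B y y ≤ c * A y y) :
    |B x y| ≤ c * (√(A x x) * √(A y y)) := by
  calc |B x y| ≤ √(B x x) * √(B y y) := abs_apply_le_sqrt_mul_sqrt hs hB x y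
    _ ≤ √(c * A x x) * √(c * A y y) := by gcongr
    _ = c * (√(A x x) * √(A y y)) := by
      rw [Real.sqrt_mul hc, Real.sqrt_mul hc]
      linear_combination (√(A x x) * √(A y y)) * Real.mul_self_sqrt hc

end LinearMap.BilinForm

/-- Boundedness of the abstract VEM bilinear form: under the stability assumptions,
`|aʰ(u,v)| ≤ max{1,α⋆⋆} a(u,u)^{1/2} a(v,v)^{1/2}`. -/
theorem stmt7 {V : Type*} [AddCommGroup V] [Module ℝ V]
    (a S : LinearMap.BilinForm ℝ V) (P : V →ₗ[ℝ] V)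
    (asymm : ∀ u v : V, a u v = a v u) (apsd : ∀ v : V, 0 ≤ a v v)
    (horth : ∀ u v : V, a (u - P u) (P v) = 0)
    (Ssymm : ∀ u v : V, S u v = S v u) (Spsd : ∀ v : V, 0 ≤ S v v)
    (αss : ℝ)
    (hS : ∀ v : V, S (v - P v) (v - P v) ≤ αss * a (v - P v) (v - P v))
    (ah : V → V → ℝ)
    (hah : ∀ u v : V, ah u v = a (P u) (P v) + S (u - P u) (v - P v)) :
    ∀ u v : V, |ah u v| ≤ max 1 αss * (Real.sqrt (a u u) * Real.sqrt (a v v)) := by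
  intro u v
  set M := max 1 αss
  have hM : 0 ≤ M := zero_le_one.trans (le_max_left _ _)
  have pythagoras (w : V) : a w w = a (P w) (P w) + a (w - P w) (w - P w) := by
    rw [add_comm]
    simpa using a.apply_add_self_of_apply_eq_zero ⟨asymm⟩ (horth w w)
  have hSM (w : V) : S (w - P w) (w - P w) ≤ M * a (w - P w) (w - P w) :=
    (hS w).trans (mul_le_mul_of_nonneg_right (le_max_right _ _) (apsd _))
  have hcons : |a (P u) (P v)| ≤ M * (√(a (P u) (P u)) * √(a (P v) (P v))) :=
    (a.abs_apply_le_sqrt_mul_sqrt apsd ⟨asymm⟩ _ _).trans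
      (le_mul_of_one_le_left (by positivity) (le_max_left _ _))
  have hstab := S.abs_apply_le_of_apply_self_le_mul Spsd ⟨Ssymm⟩ a hM (hSM u) (hSM v)
  rw [hah, pythagoras u, pythagoras v]
  calc |a (P u) (P v) + S (u - P u) (v - P v)|
      ≤ |a (P u) (P v)| + |S (u - P u) (v - P v)| := abs_add_le _ _
    _ ≤ M * (√(a (P u) (P u)) * √(a (P v) (P v))
          + √(a (u - P u) (u - P u)) * √(a (v - P v) (v - P v))) := by
      rw [mul_add]
      exact add_le_add hcons hstab
    _ ≤ M * (√(a (P u) (P u) + a (u - P u) (u - P u))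
          * √(a (P v) (P v) + a (v - P v) (v - P v))) := by
      gcongr
      exact Real.sqrt_mul_sqrt_add_sqrt_mul_sqrt_le (apsd _) (apsd _) (apsd _) (apsd _)
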